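/- arXiv:2001.00002 — 9 statements merged into one kernel-verified Lean document; each statement's English description precedes it below -/
import Mathlib

section
/- In any 2-dimensional algebra A over a field F, the identity w·[u,v] + u·[v,w] + v·[w,u] = 0 holds for all u, v, w ∈ A, where [x,y] = xy − yx. -/
/-- In any 2-dimensional algebra, `w[u,v] + u[v,w] + v[w,u] = 0`
where `[x,y] = xy - yx`. -/
theorem mul_commutator_cyclic_eq_zero
    {F A : Type*} [Field F] [AddCommGroup A] [Module F A]
    (hdim : Module.finrank F A = 2)
    (m : A →ₗ[F] A →ₗ[F] A)
    (u v w : A) :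
    m w (m u v - m v u) + m u (m v w - m w v) + m v (m w u - m u w) = 0 := by
  have hfin : Module.Finite F A := Module.finite_of_finrank_eq_succ hdim
  let b := Module.finBasisOfFinrankEq F A hdim
  obtain ⟨a1, a2, hu⟩ : ∃ a1 a2 : F, u = a1 • b 0 + a2 • b 1 :=
    ⟨b.repr u 0, b.repr u 1, by
      conv_lhs => rw [← b.sum_repr u]
      rw [Fin.sum_univ_two]⟩
  obtain ⟨b1, b2, hv⟩ : ∃ b1 b2 : F, v = b1 • b 0 + b2 • b 1 :=
    ⟨b.repr v 0, b.repr v 1, by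
      conv_lhs => rw [← b.sum_repr v]
      rw [Fin.sum_univ_two]⟩
  obtain ⟨c1, c2, hw⟩ : ∃ c1 c2 : F, w = c1 • b 0 + c2 • b 1 :=
    ⟨b.repr w 0, b.repr w 1, by
      conv_lhs => rw [← b.sum_repr w]
      rw [Fin.sum_univ_two]⟩
  subst hu hv hw
  simp only [map_add, map_smul, map_sub, LinearMap.add_apply, LinearMap.smul_apply,
    LinearMap.sub_apply, smul_add, smul_sub, smul_smul]
  module
end

section
/- For any 2-dimensional algebra A over a field F, the vector space A equipped with the bracket [u,v] = uv − vu is a Lie algebra; in particular, the Jacobi identity [[u,v],w] + [[v,w],u] + [[w,u],v] = 0 holds for all u,v,w ∈ A. -/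
section Aux

variable {F A : Type*} [Field F] [AddCommGroup A] [Module F A]
  (m : A →ₗ[F] A →ₗ[F] A)

/-- The Jacobiator of the commutator bracket. -/
noncomputable def jacB (u v w : A) : A :=
  (fun x y => m x y - m y x) ((fun x y => m x y - m y x) u v) w
  + (fun x y => m x y - m y x) ((fun x y => m x y - m y x) v w) u
  + (fun x y => m x y - m y x) ((fun x y => m x y - m y x) w u) v

lemma jacB_cyc (u v w : A) : jacB m u v w = jacB m v w u := by
  simp only [jacB]; abel

lemma jacB_span (u v : A) (a b : F) : jacB m u v (a • u + b • v) = 0 := by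
  simp only [jacB, map_add, map_smul, map_sub, LinearMap.add_apply,
    LinearMap.smul_apply, LinearMap.sub_apply, smul_sub]
  module

end Aux

/-- For any 2-dimensional algebra, the commutator bracket `[u,v] = uv - vu`
satisfies the Jacobi identity, so `(A, [·,·])` is a Lie algebra. -/
theorem commutator_jacobi
    {F A : Type*} [Field F] [AddCommGroup A] [Module F A]
    (hdim : Module.finrank F A = 2)
    (m : A →ₗ[F] A →ₗ[F] A)
    (u v w : A) :
    (let br : A → A → A := fun x y => m x y - m y x
     br (br u v) w + br (br v w) u + br (br w u) v) = 0 := by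
  show jacB m u v w = 0
  have hfd : FiniteDimensional F A :=
    Module.finite_of_finrank_pos (by rw [hdim]; norm_num)
  have hdep : ¬ LinearIndependent F ![u, v, w] := by
    intro h
    have := h.fintype_card_le_finrank
    simp [hdim] at this
  rw [Fintype.not_linearIndependent_iff] at hdep
  obtain ⟨g, hg, i, hi⟩ := hdep
  have hsum : g 0 • u + g 1 • v + g 2 • w = 0 := by
    simpa [Fin.sum_univ_three] using hg
  fin_cases i
  · have hi' : g 0 ≠ 0 := hi
    have hu : u = (-(g 0)⁻¹ * g 1) • v + (-(g 0)⁻¹ * g 2) • w := by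
      have h3 : u = (g 0)⁻¹ • (g 0 • u) := by
        rw [smul_smul, inv_mul_cancel₀ hi', one_smul]
      have h2 : g 0 • u = -(g 1 • v) + -(g 2 • w) := by
        linear_combination (norm := module) hsum
      rw [h2] at h3
      rw [h3]; module
    rw [jacB_cyc, hu]
    exact jacB_span m v w _ _
  · have hi' : g 1 ≠ 0 := hi
    have hv : v = (-(g 1)⁻¹ * g 2) • w + (-(g 1)⁻¹ * g 0) • u := by
      have h3 : v = (g 1)⁻¹ • (g 1 • v) := by
        rw [smul_smul, inv_mul_cancel₀ hi', one_smul]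
      have h2 : g 1 • v = -(g 2 • w) + -(g 0 • u) := by
        linear_combination (norm := module) hsum
      rw [h2] at h3
      rw [h3]; module
    rw [jacB_cyc, jacB_cyc, hv]
    exact jacB_span m w u _ _
  · have hi' : g 2 ≠ 0 := hi
    have hw : w = (-(g 2)⁻¹ * g 0) • u + (-(g 2)⁻¹ * g 1) • v := by
      have h3 : w = (g 2)⁻¹ • (g 2 • w) := by
        rw [smul_smul, inv_mul_cancel₀ hi', one_smul]
      have h2 : g 2 • w = -(g 0 • u) + -(g 1 • v) := by
        linear_combination (norm := module) hsum
      rw [h2] at h3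
      rw [h3]; module
    rw [hw]
    exact jacB_span m u v _ _
end

section
/- Let A be the 2-dimensional algebra over a field F of characteristic ≠ 2,3 with basis e_1, e_2 and multiplication e_1e_1 = (1/3)e_1 + e_2, e_1e_2 = (2/3)e_2, e_2e_1 = −(1/3)e_2, e_2e_2 = 0. Then for all u, v, w ∈ A the identity 2[u,v]w + w[u,v] = 0 holds, where [u,v] = uv − vu. -/
/-- The algebra `A₉`: `e₁e₁ = (1/3)e₁ + e₂`, `e₁e₂ = (2/3)e₂`,
`e₂e₁ = -(1/3)e₂`, `e₂e₂ = 0`, on `F × F` with `e₁ = (1,0)`, `e₂ = (0,1)`. -/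
def mulA9 {F : Type*} [Field F] (u v : F × F) : F × F :=
  (u.1 * v.1 * (1/3),
   u.1 * v.1 + (2/3) * (u.1 * v.2) - (1/3) * (u.2 * v.1))

/-- In `A₉` (char F ≠ 2,3) one has `2[u,v]w + w[u,v] = 0`. -/
theorem A9_two_commutator_mul_add_mul_commutator
    {F : Type*} [Field F] (h2 : (2 : F) ≠ 0) (h3 : (3 : F) ≠ 0)
    (u v w : F × F) :
    (2 : F) • mulA9 (mulA9 u v - mulA9 v u) w
      + mulA9 w (mulA9 u v - mulA9 v u) = 0 := by
  simp only [mulA9, Prod.ext_iff, Prod.smul_fst, Prod.smul_snd, Prod.fst_add,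
    Prod.snd_add, Prod.fst_sub, Prod.snd_sub, Prod.fst_zero, Prod.snd_zero,
    smul_eq_mul]
  constructor <;> field_simp <;> ring
end

section
/- Let A be the 2-dimensional algebra over a field F of characteristic ≠ 2,3 with basis e_1, e_2 and multiplication e_1e_1 = e_2, e_1e_2 = e_2e_1 = e_1, e_2e_2 = −e_2. Then for all u, v, w ∈ A with coordinates u = x_1e_1 + x_2e_2, v = y_1e_1 + y_2e_2, w = z_1e_1 + z_2e_2, the associator satisfies [u,v,w] = 2(x_1z_2 − x_2z_1)(y_2e_1 − y_1e_2); consequently [u,v,w] = −[w,v,u] and [u,v,w] + [v,w,u] + [w,u,v] = 0. -/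
/-- The algebra `A₁₁`: `e₁e₁ = e₂`, `e₁e₂ = e₂e₁ = e₁`, `e₂e₂ = -e₂`,
on `F × F` with `e₁ = (1,0)`, `e₂ = (0,1)`. -/
def mulA11 {F : Type*} [Field F] (u v : F × F) : F × F :=
  (u.1 * v.2 + u.2 * v.1, u.1 * v.1 - u.2 * v.2)

/-- The associator `[u,v,w] = (uv)w - u(vw)` in `A₁₁`. -/
def assocA11 {F : Type*} [Field F] (u v w : F × F) : F × F :=
  mulA11 (mulA11 u v) w - mulA11 u (mulA11 v w)

/-- In `A₁₁` (char F ≠ 2,3): `[u,v,w] = 2(x₁z₂ - x₂z₁)(y₂e₁ - y₁e₂)`;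
consequently `[u,v,w] = -[w,v,u]` and `[u,v,w] + [v,w,u] + [w,u,v] = 0`. -/
theorem A11_associator_identities
    {F : Type*} [Field F] (h2 : (2 : F) ≠ 0) (h3 : (3 : F) ≠ 0) :
    (∀ x1 x2 y1 y2 z1 z2 : F,
      assocA11 (x1, x2) (y1, y2) (z1, z2)
        = (2 * (x1 * z2 - x2 * z1) * y2, -(2 * (x1 * z2 - x2 * z1) * y1))) ∧
    (∀ u v w : F × F, assocA11 u v w = -assocA11 w v u) ∧
    (∀ u v w : F × F, assocA11 u v w + assocA11 v w u + assocA11 w u v = 0) := by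
  refine ⟨fun x1 x2 y1 y2 z1 z2 => ?_, fun u v w => ?_, fun u v w => ?_⟩ <;>
    · ext <;>
      simp only [assocA11, mulA11, Prod.fst_sub, Prod.snd_sub, Prod.fst_add,
        Prod.snd_add, Prod.fst_neg, Prod.snd_neg, Prod.fst_zero, Prod.snd_zero] <;>
      ring
end

section
/- Let F be a field of characteristic ≠ 2,3 and let A_4(α₁, β₂) denote the 2-dimensional algebra with basis e_1, e_2 and products e_1e_1 = α₁e_1, e_1e_2 = β₂e_2, e_2e_1 = (1−α₁)e_2, e_2e_2 = 0. Then A_4(α₁, β₂) satisfies the left Poisson identity (uv)w + (vw)u + (wu)v = 0 for all u,v,w if and only if α₁ = 0 and β₂ = −1. -/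
/-- The algebra `A₄(α₁, β₂)`: `e₁e₁ = α₁e₁`, `e₁e₂ = β₂e₂`,
`e₂e₁ = (1-α₁)e₂`, `e₂e₂ = 0`, on `F × F` with `e₁ = (1,0)`, `e₂ = (0,1)`. -/
def mulA4 {F : Type*} [Field F] (a b : F) (u v : F × F) : F × F :=
  (a * (u.1 * v.1), b * (u.1 * v.2) + (1 - a) * (u.2 * v.1))

/-- For `char F ≠ 2,3`, `A₄(α₁, β₂)` satisfies the left Poisson identity
`(uv)w + (vw)u + (wu)v = 0` iff `α₁ = 0` and `β₂ = -1`. -/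
theorem A4_leftPoisson_iff
    {F : Type*} [Field F] (h2 : (2 : F) ≠ 0) (h3 : (3 : F) ≠ 0)
    (a b : F) :
    (∀ u v w : F × F,
      mulA4 a b (mulA4 a b u v) w + mulA4 a b (mulA4 a b v w) u
        + mulA4 a b (mulA4 a b w u) v = 0)
    ↔ (a = 0 ∧ b = -1) := by
  constructor
  · intro h
    have h1 := h (1, 0) (1, 0) (1, 0)
    have h2' := h (1, 0) (1, 0) (0, 1)
    simp only [mulA4, Prod.mk_add_mk, Prod.ext_iff, Prod.fst_zero, Prod.snd_zero, Prod.fst_add, Prod.snd_add] at h1 h2'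
    have ha : a = 0 := by
      have := h1.1
      have h3a : 3 * (a * a) = 0 := by linear_combination this
      rcases mul_eq_zero.mp h3a with h' | h'
      · exact absurd h' h3
      · exact pow_eq_zero_iff (n := 2) (by norm_num) |>.mp (by rw [sq]; exact h')
    subst ha
    refine ⟨rfl, ?_⟩
    have := h2'.2
    linear_combination this
  · rintro ⟨ha, hb⟩
    subst ha hb
    intro u v w
    simp only [mulA4, Prod.mk_add_mk, Prod.ext_iff, Prod.fst_zero, Prod.snd_zero, Prod.fst_add, Prod.snd_add]
    constructor <;> ring
end

section
/- Let F be a field of characteristic ≠ 2,3 and let A_8(α₁) denote the 2-dimensional algebra with basis e_1, e_2 and products e_1e_1 = α₁e_1, e_1e_2 = (1−α₁)e_2, e_2e_1 = −α₁e_2, e_2e_2 = 0. Then A_8(α₁) satisfies the left Poisson identity (uv)w + (vw)u + (wu)v = 0 for all u,v,w if and only if α₁ = 0. -/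
/-- The algebra `A₈(α₁)`: `e₁e₁ = α₁e₁`, `e₁e₂ = (1-α₁)e₂`,
`e₂e₁ = -α₁e₂`, `e₂e₂ = 0`, on `F × F` with `e₁ = (1,0)`, `e₂ = (0,1)`. -/
def mulA8 {F : Type*} [Field F] (a : F) (u v : F × F) : F × F :=
  (a * (u.1 * v.1), (1 - a) * (u.1 * v.2) - a * (u.2 * v.1))

/-- For `char F ≠ 2,3`, `A₈(α₁)` satisfies the left Poisson identity
`(uv)w + (vw)u + (wu)v = 0` iff `α₁ = 0`. -/
theorem A8_leftPoisson_iff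
    {F : Type*} [Field F] (h2 : (2 : F) ≠ 0) (h3 : (3 : F) ≠ 0)
    (a : F) :
    (∀ u v w : F × F,
      mulA8 a (mulA8 a u v) w + mulA8 a (mulA8 a v w) u
        + mulA8 a (mulA8 a w u) v = 0)
    ↔ a = 0 := by
  constructor
  · intro h
    have := h (1, 0) (1, 0) (1, 0)
    simp only [mulA8, Prod.mk_add_mk, Prod.ext_iff, Prod.mk.injEq] at this
    have h1 := this.1
    simp only [Prod.fst_zero] at h1
    ring_nf at h1
    have : a * a = 0 := by
      rcases mul_eq_zero.mp (show a ^ 2 * 3 = 0 from h1) with h | h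
      · simpa [sq, mul_self_eq_zero] using h
      · exact absurd h h3
    exact mul_self_eq_zero.mp this
  · rintro rfl u v w
    simp [mulA8, Prod.ext_iff]
end

section
/- Let F be a field of characteristic ≠ 2,3 and let A_4(α₁, β₂) denote the 2-dimensional algebra with basis e_1, e_2 and products e_1e_1 = α₁e_1, e_1e_2 = β₂e_2, e_2e_1 = (1−α₁)e_2, e_2e_2 = 0. Then A_4(α₁, β₂) is associative if and only if (α₁, β₂) ∈ {(1/2, 1/2), (1, 0), (1, 1), (1/2, 0)}. -/
/-- For `char F ≠ 2,3`, `A₄(α₁, β₂)` is associative iff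
`(α₁, β₂) ∈ {(1/2,1/2), (1,0), (1,1), (1/2,0)}`. -/
theorem A4_associative_iff
    {F : Type*} [Field F] (h2 : (2 : F) ≠ 0) (h3 : (3 : F) ≠ 0)
    (a b : F) :
    (∀ u v w : F × F, mulA4 a b (mulA4 a b u v) w = mulA4 a b u (mulA4 a b v w))
    ↔ ((a, b) = ((1:F)/2, (1:F)/2) ∨ (a, b) = ((1:F), (0:F))
        ∨ (a, b) = ((1:F), (1:F)) ∨ (a, b) = ((1:F)/2, (0:F))) := by
  constructor
  · intro h
    have h1 := h (0,1) (1,0) (1,0)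
    have hb := h (1,0) (1,0) (0,1)
    simp only [mulA4, Prod.mk.injEq] at h1 hb
    have ha' : (1 - a) * (1 - 2*a) = 0 := by linear_combination h1.2
    have hb' : b * (b - a) = 0 := by linear_combination -hb.2
    rcases mul_eq_zero.mp ha' with ha | ha <;>
    rcases mul_eq_zero.mp hb' with hbz | hbz
    · right; left
      simp only [Prod.mk.injEq]
      exact ⟨by linear_combination -ha, hbz⟩
    · right; right; left
      simp only [Prod.mk.injEq]
      exact ⟨by linear_combination -ha, by linear_combination hbz - ha⟩
    · right; right; right
      simp only [Prod.mk.injEq]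
      refine ⟨?_, hbz⟩
      field_simp
      linear_combination -ha
    · left
      simp only [Prod.mk.injEq]
      constructor
      · field_simp
        linear_combination -ha
      · field_simp
        linear_combination -ha + 2 * hbz
  · rintro (h | h | h | h) <;>
    · rw [Prod.mk.injEq] at h
      obtain ⟨ha, hb⟩ := h
      subst ha; subst hb
      intro u v w
      simp only [mulA4, Prod.mk.injEq]
      refine ⟨by ring, ?_⟩
      field_simp
      all_goals first
      | ring1
      | (left; first | trivial | ring1)
end

section
/- Let F be a field of characteristic ≠ 2,3 and let A_4(α₁, β₂) denote the 2-dimensional algebra with basis e_1, e_2 and products e_1e_1 = α₁e_1, e_1e_2 = β₂e_2, e_2e_1 = (1−α₁)e_2, e_2e_2 = 0. Then A_4 satisfies the left Malcev identity ((uv)w + (vw)u + (wu)v)u = (uv)(uw) + (v(uw))u + ((uw)u)v for all u,v,w if and only if (α₁, β₂) ∈ {(0, −1), (1/2, 1/2), (1, 0)}. -/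
/-- For `char F ≠ 2,3`, `A₄(α₁, β₂)` satisfies the left Malcev identity
`((uv)w + (vw)u + (wu)v)u = (uv)(uw) + (v(uw))u + ((uw)u)v` iff
`(α₁, β₂) ∈ {(0,-1), (1/2,1/2), (1,0)}`. -/
theorem A4_leftMalcev_iff
    {F : Type*} [Field F] (h2 : (2 : F) ≠ 0) (h3 : (3 : F) ≠ 0)
    (a b : F) :
    (∀ u v w : F × F,
      mulA4 a b (mulA4 a b (mulA4 a b u v) w + mulA4 a b (mulA4 a b v w) u
          + mulA4 a b (mulA4 a b w u) v) u
        = mulA4 a b (mulA4 a b u v) (mulA4 a b u w)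
          + mulA4 a b (mulA4 a b v (mulA4 a b u w)) u
          + mulA4 a b (mulA4 a b (mulA4 a b u w) u) v)
    ↔ ((a, b) = ((0:F), (-1:F)) ∨ (a, b) = ((1:F)/2, (1:F)/2)
        ∨ (a, b) = ((1:F), (0:F))) := by
  constructor
  · intro h
    have e1 := congrArg Prod.snd (h (1, 1) (1, 0) (1, 0))
    have e2 := congrArg Prod.snd (h (1, 0) (0, 1) (1, 0))
    simp only [mulA4, Prod.fst_add, Prod.snd_add] at e1 e2
    -- e1 :  lhs - rhs = -a - a*b + 2*a^2 + 3*a^2*b - a^3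
    -- e2 :  lhs - rhs = 1 + b - 4*a - 2*a*b + 5*a^2 - 2*a^3
    by_cases ha : 2 * a = 1
    · right; left
      have ha0 : a ≠ 0 := by
        intro h0
        rw [h0, mul_zero] at ha
        exact one_ne_zero ha.symm
      have key : a * (a ^ 2 - 2 * a - 3 * a * b + b + 1) = 0 := by
        linear_combination -e1
      have hQ : a ^ 2 - 2 * a - 3 * a * b + b + 1 = 0 :=
        (mul_eq_zero.mp key).resolve_left ha0
      have hb : 2 * b = 1 := by
        linear_combination -4 * hQ + (2 * a - 3 - 6 * b) * ha
      rw [Prod.mk.injEq, eq_div_iff h2, eq_div_iff h2]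
      constructor
      · linear_combination ha
      · linear_combination hb
    · have h12 : (1 : F) - 2 * a ≠ 0 := by
        intro h12
        exact ha (by linear_combination -h12)
      have hb : b = -(a - 1) ^ 2 := by
        have key : b * (1 - 2 * a) = -(a - 1) ^ 2 * (1 - 2 * a) := by
          linear_combination e2
        exact mul_right_cancel₀ h12 key
      subst hb
      have key : 3 * (a ^ 2 * (a - 1) ^ 2) = 0 := by linear_combination -e1
      have key2 : a ^ 2 * (a - 1) ^ 2 = 0 := by
        rcases mul_eq_zero.mp key with h | h
        · exact absurd h h3
        · exact h
      rcases mul_eq_zero.mp key2 with h | h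
      · left
        have : a = 0 := pow_eq_zero_iff (n := 2) two_ne_zero |>.mp h
        subst this; norm_num
      · right; right
        have : a = 1 := sub_eq_zero.mp (pow_eq_zero_iff (n := 2) two_ne_zero |>.mp h)
        subst this; norm_num
  · rintro (h | h | h) <;> obtain ⟨ha, hb⟩ := Prod.mk.injEq .. ▸ h
    · subst ha; subst hb
      intro u v w
      simp only [mulA4, Prod.mk_add_mk, Prod.mk.injEq]
      constructor <;> ring
    · subst ha; subst hb
      have hc : 2 * ((1:F)/2) = 1 := by
        rw [mul_one_div]
        exact div_self h2
      intro u v w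
      simp only [mulA4, Prod.mk_add_mk, Prod.mk.injEq]
      constructor
      · ring
      · linear_combination (((1:F)/2) * (((1:F)/2) + 1) * (u.1 * u.2 * v.1 * w.1)
          - (((1:F)/2) ^ 2 - ((1:F)/2) + 1) * (u.1 ^ 2 * v.2 * w.1 + u.1 ^ 2 * v.1 * w.2)) * hc
    · subst ha; subst hb
      intro u v w
      simp only [mulA4, Prod.mk_add_mk, Prod.mk.injEq]
      constructor <;> ring
end

section
/- Let F be a field of characteristic ≠ 2,3 and let A_4(α₁, β₂) denote the 2-dimensional algebra with basis e_1, e_2 and products e_1e_1 = α₁e_1, e_1e_2 = β₂e_2, e_2e_1 = (1−α₁)e_2, e_2e_2 = 0. Then A_4 satisfies the left anti-Jordan identity (uv)u² = −u(vu²) for all u,v if and only if β₂ = −1 or β₂ = 0, with α₁ = 0 in both cases; i.e., (α₁, β₂) ∈ {(0, −1), (0, 0)}. -/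
/-- For `char F ≠ 2,3`, `A₄(α₁, β₂)` satisfies the left anti-Jordan identity
`(uv)u² = -u(vu²)` iff `(α₁, β₂) ∈ {(0,-1), (0,0)}`. -/
theorem A4_leftAntiJordan_iff
    {F : Type*} [Field F] (h2 : (2 : F) ≠ 0) (h3 : (3 : F) ≠ 0)
    (a b : F) :
    (∀ u v : F × F,
      mulA4 a b (mulA4 a b u v) (mulA4 a b u u)
        = -(mulA4 a b u (mulA4 a b v (mulA4 a b u u))))
    ↔ ((a, b) = ((0:F), (-1:F)) ∨ (a, b) = ((0:F), (0:F))) := by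
  constructor
  · intro h
    have h1 := congrArg Prod.fst (h (1, 0) (1, 0))
    simp only [mulA4, Prod.neg_mk] at h1
    have ha : a = 0 := by
      have : (2 : F) * a ^ 3 = 0 := by ring_nf; ring_nf at h1; linear_combination h1
      have := mul_eq_zero.mp this
      rcases this with h' | h'
      · exact absurd h' h2
      · exact pow_eq_zero_iff (by norm_num) |>.mp h'
    subst ha
    have h4 := congrArg Prod.snd (h (1, 1) (1, 0))
    simp only [mulA4, Prod.neg_mk] at h4
    have hb : b ^ 2 * (b + 1) = 0 := by linear_combination h4
    rcases mul_eq_zero.mp hb with h' | h'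
    · right
      have : b = 0 := pow_eq_zero_iff (by norm_num) |>.mp h'
      simp [this]
    · left
      have : b = -1 := by linear_combination h'
      simp [this]
  · rintro (h | h) <;> injection h with ha hb <;> subst ha <;> subst hb <;>
      intro u v <;> simp only [mulA4, Prod.mk.injEq, Prod.neg_mk] <;>
      constructor <;> ring
end
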